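/- Let A be a finitely generated commutative k-algebra (k of characteristic 0) and D a locally nilpotent k-derivation of A. If there exists f ∈ A with D(f) = 1, then the kernel B = ker D is a subalgebra, f is transcendental over B, and the inclusion B[f] → A is an isomorphism; i.e. A is a polynomial ring in f over the ring of D-invariants. (Geometrically: if an affine variety X with a Ga-action admits a regular function f with ξ(f) = 1 for ξ the generating vector field, then X is a trivial Ga-bundle over Spec(ker D).) -/
import Mathlib

open Polynomial

section Aux

variable {k A : Type*} [Field k] [CharZero k] [CommRing A] [Algebra k A]
variable (D : A →ₗ[k] A) (hder : ∀ a b : A, D (a * b) = a * D b + D a * b)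

set_option linter.unusedSectionVars false
set_option synthInstance.maxHeartbeats 400000
set_option maxHeartbeats 1000000
include hder

lemma slice_D_one : D 1 = 0 := by
  have h := hder 1 1
  simp only [one_mul, mul_one] at h
  exact (left_eq_add.mp h)

lemma slice_D_algebraMap (r : k) : D (algebraMap k A r) = 0 := by
  have : algebraMap k A r = r • (1 : A) := Algebra.algebraMap_eq_smul_one r
  rw [this, map_smul, slice_D_one D hder, smul_zero]

/-- The kernel of `D` as a subalgebra. -/
def sliceKer : Subalgebra k A where
  carrier := {a | D a = 0}
  mul_mem' := by
    intro a b ha hb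
    simp only [Set.mem_setOf_eq] at *
    rw [hder a b, ha, hb, mul_zero, zero_mul, add_zero]
  add_mem' := by
    intro a b ha hb
    simp only [Set.mem_setOf_eq] at *
    rw [map_add, ha, hb, add_zero]
  algebraMap_mem' := fun r => slice_D_algebraMap D hder r

lemma slice_mem_ker (a : A) : a ∈ sliceKer D hder ↔ D a = 0 := Iff.rfl

lemma slice_nat_unit (n : ℕ) : IsUnit ((n + 1 : ℕ) : sliceKer D hder) := by
  have h1 : ((n + 1 : ℕ) : sliceKer D hder) = algebraMap k (sliceKer D hder) ((n + 1 : ℕ) : k) := by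
    rw [map_natCast]
  rw [h1]
  exact (isUnit_iff_ne_zero.mpr (by exact_mod_cast Nat.succ_ne_zero n)).map _

/-- A polynomial over the kernel with zero derivative is constant. -/
lemma slice_deriv_eq_zero {p : Polynomial (sliceKer D hder)}
    (hp : derivative p = 0) : p = C (p.coeff 0) := by
  ext n
  cases n with
  | zero => simp
  | succ m =>
      have h := congrArg (fun q => Polynomial.coeff q m) hp
      simp only [Polynomial.coeff_derivative, Polynomial.coeff_zero] at h
      have hu := slice_nat_unit D hder m
      have : p.coeff (m + 1) * ((m + 1 : ℕ) : sliceKer D hder) = 0 := by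
        exact_mod_cast h
      rw [mul_comm] at this
      rw [coeff_C]
      simp only [Nat.succ_ne_zero, if_false]
      exact_mod_cast (hu.mul_right_eq_zero).mp this

/-- Formal antiderivative. -/
noncomputable def sliceAntideriv (p : Polynomial (sliceKer D hder)) :
    Polynomial (sliceKer D hder) :=
  ∑ n ∈ Finset.range (p.natDegree + 1),
    Polynomial.monomial (n + 1)
      ((slice_nat_unit D hder n).unit⁻¹ * p.coeff n)

lemma slice_deriv_antideriv (p : Polynomial (sliceKer D hder)) :
    derivative (sliceAntideriv D hder p) = p := by
  unfold sliceAntideriv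
  rw [map_sum]
  have : ∀ n ∈ Finset.range (p.natDegree + 1),
      derivative (Polynomial.monomial (n + 1)
        (((slice_nat_unit D hder n).unit⁻¹ : (sliceKer D hder)ˣ) * p.coeff n))
      = Polynomial.monomial n (p.coeff n) := by
    intro n _
    have hu : (↑((slice_nat_unit D hder n).unit⁻¹) : sliceKer D hder)
        * ((n + 1 : ℕ) : sliceKer D hder) = 1 := by
      nth_rewrite 2 [← (slice_nat_unit D hder n).unit_spec]
      exact Units.inv_mul _
    rw [derivative_monomial, mul_right_comm, hu, one_mul, Nat.add_sub_cancel]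
  rw [Finset.sum_congr rfl this]
  exact (Polynomial.as_sum_range' p (p.natDegree + 1) (Nat.lt_succ_self _)).symm

variable (f : A) (hf : D f = 1)
include hf

lemma slice_D_pow (n : ℕ) : D (f ^ (n + 1)) = (n + 1 : ℕ) * f ^ n := by
  induction n with
  | zero => simp [hf]
  | succ m ih =>
      have : f ^ (m + 2) = f ^ (m + 1) * f := by ring
      rw [this, hder, hf, mul_one, ih]
      push_cast
      ring

lemma slice_D_aeval (p : Polynomial (sliceKer D hder)) :
    D (aeval f p) = aeval f (derivative p) := by
  induction p using Polynomial.induction_on' with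
  | add p q hp hq => rw [map_add, map_add, hp, hq, derivative_add, map_add]
  | monomial n b =>
      rw [aeval_monomial, derivative_monomial, aeval_monomial]
      have hb : D (algebraMap (sliceKer D hder) A b) = 0 := b.2
      cases n with
      | zero =>
          simp only [pow_zero, mul_one, Nat.zero_sub, Nat.cast_zero, mul_zero, map_zero,
            zero_mul]
          exact hb
      | succ m =>
          rw [hder, hb, zero_mul, add_zero, slice_D_pow D hder f hf]
          have : (algebraMap (sliceKer D hder) A) (b * (↑(m + 1) : sliceKer D hder))
              = algebraMap (sliceKer D hder) A b * ((m + 1 : ℕ) : A) := by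
            rw [map_mul, map_natCast]
          simp only [Nat.add_sub_cancel, this]
          ring

lemma slice_aeval_injective :
    Function.Injective (Polynomial.aeval (R := sliceKer D hder) (A := A) f) := by
  have key : ∀ n : ℕ, ∀ p : Polynomial (sliceKer D hder), p.natDegree ≤ n →
      aeval f p = 0 → p = 0 := by
    intro n
    induction n with
    | zero =>
        intro p hdeg hp
        have : p = C (p.coeff 0) := Polynomial.eq_C_of_natDegree_eq_zero (Nat.le_zero.mp hdeg)
        rw [this] at hp ⊢
        rw [aeval_C] at hp
        have : p.coeff 0 = 0 := Subtype.ext hp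
        rw [this, map_zero]
    | succ m ih =>
        intro p hdeg hp
        have hD : aeval f (derivative p) = 0 := by
          rw [← slice_D_aeval D hder f hf, hp, map_zero]
        have hd' : (derivative p).natDegree ≤ m := by
          rcases Nat.eq_zero_or_pos p.natDegree with h0 | h0
          · rw [Polynomial.eq_C_of_natDegree_eq_zero h0]
            simp
          · have := Polynomial.natDegree_derivative_lt (p := p) h0.ne'
            omega
        have hder0 : derivative p = 0 := ih _ hd' hD
        have hpc : p = C (p.coeff 0) := slice_deriv_eq_zero D hder hder0
        rw [hpc] at hp ⊢
        rw [aeval_C] at hp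
        have : p.coeff 0 = 0 := Subtype.ext hp
        rw [this, map_zero]
  intro p q hpq
  have : aeval f (p - q) = 0 := by rw [map_sub, hpq, sub_self]
  have := key (p - q).natDegree (p - q) le_rfl this
  exact sub_eq_zero.mp this

lemma slice_aeval_surjective (hln : ∀ a : A, ∃ n : ℕ, (D ^ n) a = 0) :
    Function.Surjective (Polynomial.aeval (R := sliceKer D hder) (A := A) f) := by
  have key : ∀ n : ℕ, ∀ a : A, (D ^ n) a = 0 →
      ∃ p : Polynomial (sliceKer D hder), aeval f p = a := by
    intro n
    induction n with
    | zero =>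
        intro a ha
        simp only [pow_zero, Module.End.one_apply] at ha
        exact ⟨0, by rw [map_zero, ha]⟩
    | succ m ih =>
        intro a ha
        have hDa : (D ^ m) (D a) = 0 := by
          have : (D ^ (m + 1)) a = (D ^ m) (D a) := by
            rw [pow_succ, Module.End.mul_apply]
          rw [← this, ha]
        obtain ⟨p, hp⟩ := ih (D a) hDa
        set q := sliceAntideriv D hder p with hq
        have hDq : D (a - aeval f q) = 0 := by
          rw [map_sub, slice_D_aeval D hder f hf, hq, slice_deriv_antideriv, hp, sub_self]
        have hmem : a - aeval f q ∈ sliceKer D hder := hDq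
        refine ⟨C (⟨a - aeval f q, hmem⟩ : sliceKer D hder) + q, ?_⟩
        rw [map_add, aeval_C]
        show (a - aeval f q) + aeval f q = a
        ring
  intro a
  obtain ⟨n, hn⟩ := hln a
  exact key n a hn

end Aux

/-- slice theorem: Let `A` be a finitely generated commutative `k`-algebra
(`char k = 0`) and `D` a locally nilpotent `k`-derivation with `D f = 1` for some `f`.
Then the kernel `B = ker D` is a `k`-subalgebra, `f` is transcendental over `B`, and
the natural map `B[f] → A` (polynomial evaluation at `f`) is an isomorphism. -/
theorem stmt3 {k A : Type*} [Field k] [CharZero k] [CommRing A] [Algebra k A]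
    [Algebra.FiniteType k A]
    (D : A →ₗ[k] A)
    (hder : ∀ a b : A, D (a * b) = a * D b + D a * b)
    (hln : ∀ a : A, ∃ n : ℕ, (D ^ n) a = 0)
    (f : A) (hf : D f = 1) :
    ∃ B : Subalgebra k A, (∀ a : A, a ∈ B ↔ D a = 0) ∧
      Transcendental (↥B) f ∧
      Function.Bijective (Polynomial.aeval (R := ↥B) (A := A) f) := by
  refine ⟨sliceKer D hder, fun a => Iff.rfl, ?_, ?_, ?_⟩
  · intro halg
    obtain ⟨p, hp0, hp⟩ := halg
    exact hp0 (slice_aeval_injective D hder f hf (by rw [hp, map_zero]))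
  · exact slice_aeval_injective D hder f hf
  · exact slice_aeval_surjective D hder f hf hln
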